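/- arXiv:2403.00853 — 3 statements merged into one kernel-verified Lean document; each statement's English description precedes it below -/
import Mathlib

section
/- Let f : ℝ^d → ℝ have L-Lipschitz continuous gradient, let 0 < β ≤ 1, and let x, x⁺, v, v⁻ ∈ ℝ^d with v = v⁻ + β(∇f(x) + η − v⁻) for some η ∈ ℝ^d. Then ‖∇f(x⁺) − v‖² ≤ (1 − β/2)‖∇f(x) − v⁻‖² + (1 + β/2)β‖η‖² + (1 + 2/β)L²‖x⁺ − x‖². -/
/-!
Split `∇f(x⁺) - v = (∇f(x⁺) - ∇f(x)) + (∇f(x) - v)` and apply Young's inequality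
`‖a + b‖² ≤ (1 + θ)‖a‖² + (1 + 1/θ)‖b‖²` with `θ = β/2`. The momentum update gives
`∇f(x) - v = (1 - β)(∇f(x) - v⁻) + β(-η)`, whose squared norm is at most
`(1 - β)‖∇f(x) - v⁻‖² + β‖η‖²` by convexity, and `(1 + β/2)(1 - β) ≤ 1 - β/2`.
The first term is controlled by the Lipschitz bound on the gradient.
-/

section SeminormedSpace

variable {E : Type*} [SeminormedAddCommGroup E]

theorem sq_norm_add_le_of_pos (a b : E) {θ : ℝ} (hθ : 0 < θ) :
    ‖a + b‖ ^ 2 ≤ (1 + θ) * ‖a‖ ^ 2 + (1 + 1 / θ) * ‖b‖ ^ 2 := by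
  have young : 2 * ‖a‖ * ‖b‖ ≤ θ * ‖a‖ ^ 2 + 1 / θ * ‖b‖ ^ 2 := by
    have h := sq_nonneg (θ * ‖a‖ - ‖b‖)
    rw [← mul_le_mul_iff_right₀ hθ]
    field_simp
    nlinarith
  have := norm_add_le a b
  nlinarith [norm_nonneg (a + b)]

variable [NormedSpace ℝ E]

theorem sq_norm_convex_comb_le (u w : E) {β : ℝ} (hβ0 : 0 ≤ β) (hβ1 : β ≤ 1) :
    ‖(1 - β) • u + β • w‖ ^ 2 ≤ (1 - β) * ‖u‖ ^ 2 + β * ‖w‖ ^ 2 := by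
  have htri : ‖(1 - β) • u + β • w‖ ≤ (1 - β) * ‖u‖ + β * ‖w‖ := by
    calc ‖(1 - β) • u + β • w‖ ≤ ‖(1 - β) • u‖ + ‖β • w‖ := norm_add_le _ _
      _ = (1 - β) * ‖u‖ + β * ‖w‖ := by
        rw [norm_smul, norm_smul, Real.norm_of_nonneg (by linarith), Real.norm_of_nonneg hβ0]
  calc ‖(1 - β) • u + β • w‖ ^ 2 ≤ ((1 - β) * ‖u‖ + β * ‖w‖) ^ 2 := by
        gcongr
    _ ≤ (1 - β) * ‖u‖ ^ 2 + β * ‖w‖ ^ 2 := by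
        nlinarith [mul_nonneg (mul_nonneg hβ0 (sub_nonneg.2 hβ1)) (sq_nonneg (‖u‖ - ‖w‖))]

theorem sq_norm_sub_momentum_le (gp g vm η v : E) {β : ℝ} (hβ0 : 0 < β) (hβ1 : β ≤ 1)
    (hv : v = vm + β • (g + η - vm)) :
    ‖gp - v‖ ^ 2 ≤ (1 - β / 2) * ‖g - vm‖ ^ 2 + (1 + β / 2) * β * ‖η‖ ^ 2
      + (1 + 2 / β) * ‖gp - g‖ ^ 2 := by
  have hsplit : gp - v = ((1 - β) • (g - vm) + β • (-η)) + (gp - g) := by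
    rw [hv]; module
  have hyoung := sq_norm_add_le_of_pos ((1 - β) • (g - vm) + β • (-η)) (gp - g)
    (half_pos hβ0)
  have hconv := sq_norm_convex_comb_le (g - vm) (-η) hβ0.le hβ1
  rw [norm_neg] at hconv
  rw [hsplit]
  calc _ ≤ (1 + β / 2) * ‖(1 - β) • (g - vm) + β • -η‖ ^ 2
          + (1 + 2 / β) * ‖gp - g‖ ^ 2 := by
        rwa [one_div_div] at hyoung
    _ ≤ (1 + β / 2) * ((1 - β) * ‖g - vm‖ ^ 2 + β * ‖η‖ ^ 2)
          + (1 + 2 / β) * ‖gp - g‖ ^ 2 := by gcongr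
    _ ≤ _ := by nlinarith [mul_nonneg (sq_nonneg β) (sq_nonneg ‖g - vm‖)]

end SeminormedSpace

theorem stmt_9 (d : ℕ) (L : ℝ) (f : EuclideanSpace ℝ (Fin d) → ℝ)
    (hLip : ∀ a b, ‖gradient f a - gradient f b‖ ≤ L * ‖a - b‖)
    (β : ℝ) (hβ0 : 0 < β) (hβ1 : β ≤ 1)
    (x xp vm η v : EuclideanSpace ℝ (Fin d))
    (hv : v = vm + β • (gradient f x + η - vm)) :
    ‖gradient f xp - v‖ ^ 2 ≤ (1 - β / 2) * ‖gradient f x - vm‖ ^ 2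
      + (1 + β / 2) * β * ‖η‖ ^ 2 + (1 + 2 / β) * L ^ 2 * ‖xp - x‖ ^ 2 := by
  have hgrad : ‖gradient f xp - gradient f x‖ ^ 2 ≤ L ^ 2 * ‖xp - x‖ ^ 2 := by
    rw [← mul_pow]
    exact pow_le_pow_left₀ (norm_nonneg _) (hLip xp x) 2
  have hcoef : 0 ≤ 1 + 2 / β := by positivity
  calc _ ≤ (1 - β / 2) * ‖gradient f x - vm‖ ^ 2 + (1 + β / 2) * β * ‖η‖ ^ 2
          + (1 + 2 / β) * ‖gradient f xp - gradient f x‖ ^ 2 :=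
        sq_norm_sub_momentum_le _ _ _ _ _ hβ0 hβ1 hv
    _ ≤ _ := by rw [mul_assoc _ (L ^ 2)]; gcongr
end

section
/- Let f : ℝ^d → ℝ be differentiable with L-Lipschitz continuous gradient and bounded below by f* = inf f > −∞. Consider one momentum step x⁺ = x − γ v with v = v⁻ + β(∇f(x) + η − v⁻), where γ > 0, 0 < β ≤ 1, η ∈ ℝ^d, and let φ = f(x) − f* + A‖∇f(x) − v⁻‖² and φ⁺ = f(x⁺) − f* + A‖∇f(x⁺) − v‖² for A > 0. If γ ≤ 1/L, then φ⁺ ≤ f(x) − f* − (γ/2)‖∇f(x)‖² + B₁‖∇f(x) − v⁻‖² − B₂‖x⁺ − x‖² + B₃‖η‖², where B₁ = γ(1−β)/2 + A(1 − β/2), B₂ = 1/(2γ) − L/2 − A(β+2)L²/β, and B₃ = γβ/2 + Aβ(1 + β/2). -/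
/-!
The descent lemma at `x` along the step `x⁺ - x = -γ v`, combined with the polarization
`-⟪∇f(x), v⟫ = (‖∇f(x) - v‖² - ‖∇f(x)‖² - ‖v‖²) / 2`, bounds `f(x⁺)` by
`f(x) - (γ/2)‖∇f(x)‖² + (γ/2)‖∇f(x) - v‖² - (1/(2γ) - L/2)‖x⁺ - x‖²`.
The new tracking error `∇f(x⁺) - v` is split as `(∇f(x⁺) - ∇f(x)) + (∇f(x) - v)`; Young's inequality
with weights `2/β` and `β/2` and the Lipschitz bound control it by `‖x⁺ - x‖²` and `‖∇f(x) - v‖²`.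
Finally `∇f(x) - v = (1 - β)(∇f(x) - v⁻) - βη` is a convex combination, so convexity of `‖·‖²`
bounds `‖∇f(x) - v‖²` by `(1 - β)‖∇f(x) - v⁻‖² + β‖η‖²`.
-/

open RealInnerProductSpace

section InnerProductSpace

variable {E : Type*} [NormedAddCommGroup E] [InnerProductSpace ℝ E]

theorem norm_add_sq_le_of_mul_eq_one (u w : E) {t s : ℝ} (hs : 0 ≤ s) (hts : t * s = 1) :
    ‖u + w‖ ^ 2 ≤ (1 + t) * ‖u‖ ^ 2 + (1 + s) * ‖w‖ ^ 2 := by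
  have key : 0 ≤ s * ‖t • u - w‖ ^ 2 := by positivity
  rw [norm_sub_sq_real, norm_smul, real_inner_smul_left, mul_pow, Real.norm_eq_abs, sq_abs] at key
  rw [norm_add_sq_real]
  linear_combination key + (t * ‖u‖ ^ 2 - 2 * ⟪u, w⟫) * hts

theorem norm_smul_add_smul_sq_le (a b : E) {θ μ : ℝ} (hθ : 0 ≤ θ) (hμ : 0 ≤ μ) (hθμ : θ + μ = 1) :
    ‖θ • a + μ • b‖ ^ 2 ≤ θ * ‖a‖ ^ 2 + μ * ‖b‖ ^ 2 := by
  have key : 0 ≤ θ * μ * ‖a - b‖ ^ 2 := by positivity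
  rw [norm_sub_sq_real] at key
  rw [norm_add_sq_real, norm_smul, norm_smul, real_inner_smul_left, real_inner_smul_right,
    Real.norm_eq_abs, Real.norm_eq_abs, abs_of_nonneg hθ, abs_of_nonneg hμ]
  linear_combination key + (θ * ‖a‖ ^ 2 + μ * ‖b‖ ^ 2) * hθμ

theorem norm_sub_momentum_sq_le (g vm η : E) {β : ℝ} (hβ0 : 0 ≤ β) (hβ1 : β ≤ 1) :
    ‖g - (vm + β • (g + η - vm))‖ ^ 2 ≤ (1 - β) * ‖g - vm‖ ^ 2 + β * ‖η‖ ^ 2 := by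
  have hconv : g - (vm + β • (g + η - vm)) = (1 - β) • (g - vm) + β • (-η) := by module
  rw [hconv, ← norm_neg η]
  exact norm_smul_add_smul_sq_le _ _ (by linarith) hβ0 (by ring)

theorem le_of_descent_of_eq_sub_smul {f : E → ℝ} {x xp g v : E} {γ L : ℝ} (hγ : γ ≠ 0)
    (hxp : xp = x - γ • v)
    (hdesc : f xp ≤ f x + ⟪g, xp - x⟫ + L / 2 * ‖xp - x‖ ^ 2) :
    f xp ≤ f x - γ / 2 * ‖g‖ ^ 2 + γ / 2 * ‖g - v‖ ^ 2 - (1 / (2 * γ) - L / 2) * ‖xp - x‖ ^ 2 := by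
  have hstep : xp - x = -(γ • v) := by rw [hxp]; abel
  have hpolar : ⟪g, xp - x⟫ = γ / 2 * ‖g - v‖ ^ 2 - γ / 2 * ‖g‖ ^ 2 - 1 / (2 * γ) * ‖xp - x‖ ^ 2 := by
    rw [hstep, inner_neg_right, real_inner_smul_right, norm_neg, norm_smul, mul_pow,
      Real.norm_eq_abs, sq_abs, norm_sub_sq_real]
    field_simp
    ring
  linarith

end InnerProductSpace

theorem stmt_11_general (d : ℕ) (L : ℝ) (f : EuclideanSpace ℝ (Fin d) → ℝ)
    (hLip : ∀ a b, ‖gradient f a - gradient f b‖ ≤ L * ‖a - b‖)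
    (hdesc : ∀ a b, f b ≤ f a + ⟪gradient f a, b - a⟫ + L / 2 * ‖b - a‖ ^ 2)
    (fstar : ℝ)
    (γ β A : ℝ) (hγ0 : 0 < γ) (hβ0 : 0 < β) (hβ1 : β ≤ 1) (hA : 0 < A)
    (x vm η v xp : EuclideanSpace ℝ (Fin d))
    (hv : v = vm + β • (gradient f x + η - vm))
    (hxp : xp = x - γ • v)
    (φp : ℝ)
    (hφp : φp = f xp - fstar + A * ‖gradient f xp - v‖ ^ 2) :
    φp ≤ f x - fstar - γ / 2 * ‖gradient f x‖ ^ 2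
      + (γ * (1 - β) / 2 + A * (1 - β / 2)) * ‖gradient f x - vm‖ ^ 2
      - (1 / (2 * γ) - L / 2 - A * (β + 2) * L ^ 2 / β) * ‖xp - x‖ ^ 2
      + (γ * β / 2 + A * β * (1 + β / 2)) * ‖η‖ ^ 2 := by
  set g := gradient f x
  set gp := gradient f xp
  have descent := le_of_descent_of_eq_sub_smul hγ0.ne' hxp (hdesc x xp)
  have lipschitz : ‖gp - g‖ ^ 2 ≤ L ^ 2 * ‖xp - x‖ ^ 2 := by
    rw [← mul_pow]
    exact pow_le_pow_left₀ (norm_nonneg _) (hLip xp x) 2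
  have tracking : ‖gp - v‖ ^ 2 ≤ (β + 2) / β * ‖gp - g‖ ^ 2 + (1 + β / 2) * ‖g - v‖ ^ 2 := by
    have young := norm_add_sq_le_of_mul_eq_one (gp - g) (g - v) (by positivity : 0 ≤ β / 2)
      (by field_simp : 2 / β * (β / 2) = 1)
    rwa [sub_add_sub_cancel, one_add_div hβ0.ne'] at young
  have momentum : ‖g - v‖ ^ 2 ≤ (1 - β) * ‖g - vm‖ ^ 2 + β * ‖η‖ ^ 2 := by
    rw [hv]; exact norm_sub_momentum_sq_le g vm η hβ0.le hβ1
  have hcoef : A * (β + 2) * L ^ 2 / β = A * ((β + 2) / β) * L ^ 2 := by ring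
  rw [hφp, hcoef]
  -- `(1 - β)(1 + β/2) = 1 - β/2 - β²/2`, so the stated coefficient of `‖g - vm‖²` has slack `Aβ²/2`.
  linarith [mul_le_mul_of_nonneg_left tracking hA.le,
    mul_le_mul_of_nonneg_left lipschitz (by positivity : 0 ≤ A * ((β + 2) / β)),
    mul_le_mul_of_nonneg_left momentum (by positivity : 0 ≤ γ / 2 + A * (1 + β / 2)),
    (by positivity : 0 ≤ A * β ^ 2 / 2 * ‖g - vm‖ ^ 2)]

theorem stmt_11 (d : ℕ) (L : ℝ) (f : EuclideanSpace ℝ (Fin d) → ℝ)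
    (hdiff : Differentiable ℝ f)
    (hLip : ∀ a b, ‖gradient f a - gradient f b‖ ≤ L * ‖a - b‖)
    (hdesc : ∀ a b, f b ≤ f a + ⟪gradient f a, b - a⟫ + L / 2 * ‖b - a‖ ^ 2)
    (fstar : ℝ) (hbound : ∀ z, fstar ≤ f z)
    (γ β A : ℝ) (hγ0 : 0 < γ) (hβ0 : 0 < β) (hβ1 : β ≤ 1) (hA : 0 < A)
    (hγL : γ ≤ 1 / L)
    (x vm η v xp : EuclideanSpace ℝ (Fin d))
    (hv : v = vm + β • (gradient f x + η - vm))
    (hxp : xp = x - γ • v)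
    (φ φp : ℝ)
    (hφ : φ = f x - fstar + A * ‖gradient f x - vm‖ ^ 2)
    (hφp : φp = f xp - fstar + A * ‖gradient f xp - v‖ ^ 2) :
    φp ≤ f x - fstar - γ / 2 * ‖gradient f x‖ ^ 2
      + (γ * (1 - β) / 2 + A * (1 - β / 2)) * ‖gradient f x - vm‖ ^ 2
      - (1 / (2 * γ) - L / 2 - A * (β + 2) * L ^ 2 / β) * ‖xp - x‖ ^ 2
      + (γ * β / 2 + A * β * (1 + β / 2)) * ‖η‖ ^ 2 :=
  stmt_11_general d L f hLip hdesc fstar γ β A hγ0 hβ0 hβ1 hA x vm η v xp hv hxp φp hφp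
end

section
/- Let Q : ℝ^d → ℝ^d satisfy ‖Q(x) − x‖² ≤ (1 − α)‖x‖² for all x and some 0 < α ≤ 1, and let g₁, …, g_n, x ∈ ℝ^d with ‖g_i − ∇f_i(x)‖² ≤ σ² and ‖∇f_i(x) − ∇f(x)‖² ≤ δ² for each i, where ∇f(x) = (1/n)∑ ∇f_i(x). Then η = (1/n)∑_{i=1}^n Q(g_i) − ∇f(x) satisfies ‖η‖² ≤ (1 − α/8)‖∇f(x)‖² + (1 − α/4)(1 + 8/α)δ² + [(1 − α/2)(1 + 4/α) + (1 + 2/α)]σ². -/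
/-!
Write `η = A + B`, with `A` the average of the compression errors `Q(gᵢ) - gᵢ` and `B` the
average of the noises `gᵢ - ∇fᵢ(x)`, and apply Young's inequality `‖u + v‖² ≤ (1 + β)‖u‖² +
(1 + β⁻¹)‖v‖²` with `β = α/2`. Each compression error is at most `(1 - α)‖gᵢ‖²`, and `‖gᵢ‖²` is
bounded through `∇fᵢ(x)` and `∇f(x)` by two more Young steps with `β = α/4` and `β = α/8`. Since
`(1 - 2β)(1 + β) ≤ 1 - β`, the contraction factors telescope `1 - α → 1 - α/2 → 1 - α/4 → 1 - α/8`.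
-/

open Finset

lemma norm_add_sq_le_young {E : Type*} [SeminormedAddCommGroup E] (u v : E) {β : ℝ}
    (hβ : 0 < β) : ‖u + v‖ ^ 2 ≤ (1 + β) * ‖u‖ ^ 2 + (1 + β⁻¹) * ‖v‖ ^ 2 := by
  have hamgm : 2 * ‖u‖ * ‖v‖ ≤ β * ‖u‖ ^ 2 + β⁻¹ * ‖v‖ ^ 2 := by
    have hsq : 0 ≤ β⁻¹ * (β * ‖u‖ - ‖v‖) ^ 2 := by positivity
    have hexp : β⁻¹ * (β * ‖u‖ - ‖v‖) ^ 2 = β * ‖u‖ ^ 2 + β⁻¹ * ‖v‖ ^ 2 - 2 * ‖u‖ * ‖v‖ := by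
      field_simp; ring
    linarith
  calc ‖u + v‖ ^ 2 ≤ (‖u‖ + ‖v‖) ^ 2 := by gcongr; exact norm_add_le u v
    _ ≤ (1 + β) * ‖u‖ ^ 2 + (1 + β⁻¹) * ‖v‖ ^ 2 := by linear_combination hamgm

lemma one_sub_two_mul_mul_norm_sq_le {E : Type*} [SeminormedAddCommGroup E] {u w : E}
    {β s : ℝ} (hβ : 0 < β) (hβ1 : 2 * β ≤ 1) (h : ‖w - u‖ ^ 2 ≤ s) :
    (1 - 2 * β) * ‖w‖ ^ 2 ≤ (1 - β) * ‖u‖ ^ 2 + (1 - 2 * β) * (1 + β⁻¹) * s := by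
  have hyoung := norm_add_sq_le_young u (w - u) hβ
  rw [add_sub_cancel] at hyoung
  linear_combination (1 - 2 * β) * hyoung + (1 - 2 * β) * (1 + β⁻¹) * h
    + 2 * β ^ 2 * sq_nonneg ‖u‖

lemma norm_sq_average_le {E : Type*} [SeminormedAddCommGroup E] [NormedSpace ℝ E] {ι : Type*}
    {s : Finset ι} (hs : s.Nonempty) {v : ι → E} {c : ℝ} (hv : ∀ i ∈ s, ‖v i‖ ^ 2 ≤ c) :
    ‖(1 / (#s : ℝ)) • ∑ i ∈ s, v i‖ ^ 2 ≤ c := by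
  obtain ⟨j, hj⟩ := hs
  have hc : 0 ≤ c := (sq_nonneg _).trans (hv j hj)
  have hcard : (0 : ℝ) < #s := by exact_mod_cast card_pos.mpr ⟨j, hj⟩
  have hsum : ‖∑ i ∈ s, v i‖ ≤ #s * √c := by
    simpa using norm_sum_le_of_le s fun i hi =>
      (abs_norm (v i)).symm.le.trans (Real.abs_le_sqrt (hv i hi))
  have hnorm : ‖(1 / (#s : ℝ)) • ∑ i ∈ s, v i‖ ≤ √c := by
    rw [norm_smul, Real.norm_of_nonneg (by positivity), one_div, inv_mul_le_iff₀ hcard]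
    exact hsum
  calc _ ≤ √c ^ 2 := by gcongr
    _ = c := Real.sq_sqrt hc

lemma gradient_const_mul_sum {F : Type*} [NormedAddCommGroup F] [InnerProductSpace ℝ F]
    [CompleteSpace F] {ι : Type*} {s : Finset ι} {f : ι → F → ℝ} {x : F}
    (hf : ∀ i ∈ s, DifferentiableAt ℝ (f i) x) (c : ℝ) :
    gradient (fun y => c * ∑ i ∈ s, f i y) x = c • ∑ i ∈ s, gradient (f i) x := by
  simp only [gradient]
  rw [fderiv_const_mul (DifferentiableAt.fun_sum hf), fderiv_fun_sum hf, map_smul, map_sum]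

theorem stmt_14 (d n : ℕ) (hn : 0 < n) (α σ δ : ℝ) (hα0 : 0 < α) (hα1 : α ≤ 1)
    (Q : EuclideanSpace ℝ (Fin d) → EuclideanSpace ℝ (Fin d))
    (hQ : ∀ x, ‖Q x - x‖ ^ 2 ≤ (1 - α) * ‖x‖ ^ 2)
    (fi : Fin n → EuclideanSpace ℝ (Fin d) → ℝ)
    (hdiff : ∀ i, Differentiable ℝ (fi i))
    (f : EuclideanSpace ℝ (Fin d) → ℝ)
    (hf : f = fun y => (1 / (n : ℝ)) * ∑ i, fi i y)
    (x : EuclideanSpace ℝ (Fin d))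
    (g : Fin n → EuclideanSpace ℝ (Fin d))
    (hg : ∀ i, ‖g i - gradient (fi i) x‖ ^ 2 ≤ σ ^ 2)
    (hsim : ∀ i, ‖gradient (fi i) x - gradient f x‖ ^ 2 ≤ δ ^ 2)
    (η : EuclideanSpace ℝ (Fin d))
    (hη : η = (1 / (n : ℝ)) • ∑ i, Q (g i) - gradient f x) :
    ‖η‖ ^ 2 ≤ (1 - α / 8) * ‖gradient f x‖ ^ 2
      + (1 - α / 4) * (1 + 8 / α) * δ ^ 2
      + ((1 - α / 2) * (1 + 4 / α) + (1 + 2 / α)) * σ ^ 2 := by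
  have hgrad : gradient f x = (1 / (n : ℝ)) • ∑ i, gradient (fi i) x := by
    rw [hf]; exact gradient_const_mul_sum (fun i _ => (hdiff i).differentiableAt) _
  have havg {v : Fin n → EuclideanSpace ℝ (Fin d)} {c : ℝ} (hv : ∀ i, ‖v i‖ ^ 2 ≤ c) :
      ‖(1 / (n : ℝ)) • ∑ i, v i‖ ^ 2 ≤ c := by
    simpa using norm_sq_average_le (univ_nonempty_iff.mpr ⟨⟨0, hn⟩⟩) fun i _ => hv i
  set R := (1 - α / 8) * ‖gradient f x‖ ^ 2 + (1 - α / 4) * (1 + 8 / α) * δ ^ 2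
    + (1 - α / 2) * (1 + 4 / α) * σ ^ 2
  have hgi (i : Fin n) : (1 - α / 2) * ‖g i‖ ^ 2 ≤ R := by
    have h1 := one_sub_two_mul_mul_norm_sq_le (β := α / 8) (by positivity) (by linarith) (hsim i)
    have h2 := one_sub_two_mul_mul_norm_sq_le (β := α / 4) (by positivity) (by linarith) (hg i)
    linear_combination h2 + h1
  set A := (1 / (n : ℝ)) • ∑ i, (Q (g i) - g i)
  set B := (1 / (n : ℝ)) • ∑ i, (g i - gradient (fi i) x)
  have hcompress : (1 + α / 2) * ‖A‖ ^ 2 ≤ R := by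
    rw [← le_div_iff₀' (by positivity)]
    refine havg fun i => (le_div_iff₀' (by positivity)).mpr ?_
    linear_combination (1 + α / 2) * hQ (g i) + hgi i + α ^ 2 / 2 * sq_nonneg ‖g i‖
  have hnoise : ‖B‖ ^ 2 ≤ σ ^ 2 := havg fun i => hg i
  have hsplit : η = A + B := by
    rw [hη, hgrad]; simp only [A, B, sum_sub_distrib, smul_sub]; abel
  rw [hsplit]
  linear_combination norm_add_sq_le_young A B (half_pos hα0) + hcompress + (1 + 2 / α) * hnoise
end
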